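/- arXiv:2502.14708 — 6 statements merged into one kernel-verified Lean document; each statement's English description precedes it below -/
import Mathlib

section
/- Suppose σ_θ² = 0 and E[b(ω)²] < σ_ω². Then for any r ∈ [0,1], both a rational agent (r=1) and a biased agent with parameter r never choose the default action a=0: for each attention cost c > 0 they either delegate or pay attention, delegating exactly when c exceeds their (perceived) delegation loss r²E[b(ω)²]. Consequently, for attention costs c ∈ (r²E[b(ω)²], E[b(ω)²]) the biased agent delegates while the rational agent pays attention. -/
/-- With σθ² = 0 and 0 < E[b(ω)²] = B < σω², for any r ∈ [0,1] the agent never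
takes the default action: they delegate exactly when c exceeds the perceived
delegation loss r²B and pay attention when c is below it. For
c ∈ (r²B, B) the biased agent delegates while the rational agent (r = 1)
pays attention. -/
theorem stmt6 (σω B r : ℝ) (hσ : 0 < σω) (hB0 : 0 < B) (hB : B < σω ^ 2)
    (hr0 : 0 ≤ r) (hr1 : r ≤ 1) :
    ∀ c : ℝ, 0 < c →
      (r ^ 2 * B < c → max (-c) (-σω ^ 2) < -(r ^ 2 * B)) ∧
      (c < r ^ 2 * B → max (-(r ^ 2 * B)) (-σω ^ 2) < -c) ∧
      (r ^ 2 * B < c ∧ c < B →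
        max (-c) (-σω ^ 2) < -(r ^ 2 * B) ∧
        max (-((1 : ℝ) ^ 2 * B)) (-σω ^ 2) < -c) := by
  intro c hc
  have hrB : r ^ 2 * B ≤ B := by nlinarith [mul_le_one₀ hr1 hr0 hr1, sq_nonneg r]
  refine ⟨fun h => max_lt (by linarith) (by nlinarith), fun h => max_lt (by linarith) (by nlinarith), fun ⟨h1, h2⟩ => ⟨max_lt (by linarith) (by nlinarith), max_lt (by nlinarith) (by nlinarith)⟩⟩
end

section
/- Fix r ∈ (0,1) and let ε > 0 be small enough that b_L := σ_ω/r - ε > σ_ω. Consider two GenAI models with constant biases b_L and b_H := σ_ω/r + ε. A rational agent never delegates to either model (since b_L², b_H² > σ_ω²). The biased agent with parameter r never delegates with model b_H (since r·b_H > σ_ω), but delegates with positive probability with model b_L (since r·b_L < σ_ω), and every such delegation yields true payoff -b_L² < -σ_ω², strictly worse than the default action. Hence the biased agent's expected welfare is strictly lower with the less-biased model b_L than with the more-biased model b_H. -/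
/-!
Since `r b_H > σω`, the agent facing model `b_H` never delegates and realizes `-min c σω²`.
Facing `b_L` it realizes at most that for every cost, and strictly less (`-b_L² < -σω²`) whenever
it delegates, i.e. on the event `c > r² b_L²`, which has positive probability.
-/

open MeasureTheory Set

/-- `d` is the perceived loss from delegating, `v` the loss from the default action and `t` the
true loss from delegating; in the model `d = r²b²`, `v = σω²`, `t = b²`. -/
noncomputable def delegationPayoff (d v t c : ℝ) : ℝ :=
  if d < v ∧ d < c then -t else if c < min d v then -c else -v

section delegationPayoff

variable {d v t c : ℝ}

theorem delegationPayoff_of_le (h : v ≤ d) : delegationPayoff d v t c = -min c v := by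
  have hmin : min d v = v := min_eq_right h
  unfold delegationPayoff
  rw [if_neg fun hd => h.not_gt hd.1, hmin]
  split_ifs with hc
  · rw [min_eq_left hc.le]
  · rw [min_eq_right (not_lt.1 hc)]

theorem delegationPayoff_le (h : v ≤ t) : delegationPayoff d v t c ≤ -min c v := by
  unfold delegationPayoff
  split_ifs with _ hc
  · linarith [min_le_right c v]
  · rw [min_eq_left (hc.trans_le (min_le_right d v)).le]
  · linarith [min_le_right c v]

theorem delegationPayoff_of_lt (hd : d < v) (hc : d < c) : delegationPayoff d v t c = -t :=
  if_pos ⟨hd, hc⟩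

theorem measurable_delegationPayoff : Measurable (delegationPayoff d v t) :=
  Measurable.ite ((MeasurableSet.const _).inter measurableSet_Ioi) measurable_const
    (Measurable.ite measurableSet_Iio measurable_neg measurable_const)

theorem abs_delegationPayoff_le (hc : 0 ≤ c) (hv : 0 ≤ v) (ht : 0 ≤ t) :
    |delegationPayoff d v t c| ≤ max t v := by
  unfold delegationPayoff
  split_ifs with _ hc'
  · rw [abs_neg, abs_of_nonneg ht]; exact le_max_left t v
  · rw [abs_neg, abs_of_nonneg hc]
    exact (hc'.trans_le (min_le_right d v)).le.trans (le_max_right t v)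
  · rw [abs_neg, abs_of_nonneg hv]; exact le_max_right t v

theorem integrable_delegationPayoff {μ : Measure ℝ} [IsFiniteMeasure μ]
    (hμ : ∀ᵐ c ∂μ, 0 ≤ c) (hv : 0 ≤ v) (ht : 0 ≤ t) :
    Integrable (delegationPayoff d v t) μ :=
  .of_bound measurable_delegationPayoff.aestronglyMeasurable (max t v)
    (hμ.mono fun _ hc => abs_delegationPayoff_le hc hv ht)

end delegationPayoff

theorem integral_lt_integral_of_le_of_lt_on {α : Type*} [MeasurableSpace α] {μ : Measure α}
    {f g : α → ℝ} {s : Set α} (hf : Integrable f μ) (hg : Integrable g μ)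
    (hle : ∀ x, f x ≤ g x) (hlt : ∀ x ∈ s, f x < g x) (hs : μ s ≠ 0) :
    ∫ x, f x ∂μ < ∫ x, g x ∂μ := by
  rw [← sub_pos, ← integral_sub hg hf,
    integral_pos_iff_support_of_nonneg_ae (.of_forall fun x => sub_nonneg.2 (hle x)) (hg.sub hf)]
  refine (pos_iff_ne_zero.2 hs).trans_le (measure_mono fun x hx => ?_)
  exact (sub_pos.2 (hlt x hx)).ne'

theorem integral_delegationPayoff_lt {μ : Measure ℝ} [IsFiniteMeasure μ]
    (hμ : ∀ᵐ c ∂μ, 0 ≤ c) {d d' v t t' : ℝ} (hv : 0 ≤ v) (hdv : d < v) (hvt : v < t)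
    (hvd' : v ≤ d') (ht' : 0 ≤ t') (hd : μ (Ioi d) ≠ 0) :
    ∫ c, delegationPayoff d v t c ∂μ < ∫ c, delegationPayoff d' v t' c ∂μ := by
  refine integral_lt_integral_of_le_of_lt_on (integrable_delegationPayoff hμ hv (hv.trans hvt.le))
    (integrable_delegationPayoff hμ hv ht') (fun c => ?_) (fun c hc => ?_) hd
  · rw [delegationPayoff_of_le hvd']
    exact delegationPayoff_le hvt.le
  · rw [delegationPayoff_of_le hvd', delegationPayoff_of_lt hdv hc]
    linarith [min_le_right c v]

open MeasureTheory Classical in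
theorem stmt7_general (μ : Measure ℝ) [IsProbabilityMeasure μ] (σω r ε : ℝ)
    (hσ : 0 < σω) (hr0 : 0 < r) (hε : 0 < ε)
    (hL : σω < σω / r - ε)
    (hpos : μ {c | c ≤ 0} = 0)
    (hsupp : ∀ x : ℝ, 0 ≤ x → 0 < μ (Set.Ioi x)) :
    letI bL : ℝ := σω / r - ε
    letI bH : ℝ := σω / r + ε
    letI W : ℝ → ℝ := fun b => ∫ c,
      (if r ^ 2 * b ^ 2 < σω ^ 2 ∧ r ^ 2 * b ^ 2 < c then -b ^ 2
       else if c < min (r ^ 2 * b ^ 2) (σω ^ 2) then -c else -σω ^ 2) ∂μ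
    (¬ (1 : ℝ) ^ 2 * bL ^ 2 < σω ^ 2) ∧
    (¬ (1 : ℝ) ^ 2 * bH ^ 2 < σω ^ 2) ∧
    (¬ r ^ 2 * bH ^ 2 < σω ^ 2) ∧
    (r ^ 2 * bL ^ 2 < σω ^ 2) ∧
    (0 < μ (Set.Ioi (r ^ 2 * bL ^ 2))) ∧
    (-bL ^ 2 < -σω ^ 2) ∧
    W bL < W bH := by
  set bL := σω / r - ε with hbL_def
  set bH := σω / r + ε with hbH_def
  have hbH : σω < bH := by linarith
  have hrε : 0 < r * ε := mul_pos hr0 hε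
  have hrbL : r * bL = σω - r * ε := by rw [hbL_def]; field_simp
  have hrbH : r * bH = σω + r * ε := by rw [hbH_def]; field_simp
  have hrbL_pos : 0 < r * bL := mul_pos hr0 (hσ.trans hL)
  have hσbL : σω ^ 2 < bL ^ 2 := by gcongr
  have hσbH : σω ^ 2 ≤ bH ^ 2 := by gcongr
  have hσrbH : σω ^ 2 ≤ r ^ 2 * bH ^ 2 := by
    rw [← mul_pow]; gcongr; linarith
  have hrbLσ : r ^ 2 * bL ^ 2 < σω ^ 2 := by
    rw [← mul_pow]; gcongr; linarith
  have hμL : 0 < μ (Ioi (r ^ 2 * bL ^ 2)) := hsupp _ (by positivity)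
  refine ⟨by simpa using hσbL.le, by simpa using hσbH, hσrbH.not_gt, hrbLσ, hμL,
    neg_lt_neg hσbL, ?_⟩
  have hμ : ∀ᵐ c ∂μ, 0 ≤ c := ae_iff.2 <| measure_mono_null (fun c hc => by
    simp only [mem_ofPred_eq, not_le] at hc ⊢; exact hc.le) hpos
  exact integral_delegationPayoff_lt hμ (sq_nonneg σω) hrbLσ hσbL hσrbH (sq_nonneg bH) hμL.ne'

open MeasureTheory Classical in
/-- Fix r ∈ (0,1) and ε > 0 with b_L := σω/r - ε > σω, b_H := σω/r + ε.
A rational agent never delegates to either model; the biased agent never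
delegates with model b_H but delegates with positive probability with model
b_L, each such delegation yielding true payoff -b_L² < -σω².  Hence the
biased agent's expected welfare is strictly lower with the less-biased
model b_L than with the more-biased model b_H. -/
theorem stmt7 (μ : Measure ℝ) [IsProbabilityMeasure μ] (σω r ε : ℝ)
    (hσ : 0 < σω) (hr0 : 0 < r) (hr1 : r < 1) (hε : 0 < ε)
    (hL : σω < σω / r - ε)
    (hpos : μ {c | c ≤ 0} = 0)
    (hsupp : ∀ x : ℝ, 0 ≤ x → 0 < μ (Set.Ioi x)) :
    letI bL : ℝ := σω / r - ε
    letI bH : ℝ := σω / r + ε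
    letI W : ℝ → ℝ := fun b => ∫ c,
      (if r ^ 2 * b ^ 2 < σω ^ 2 ∧ r ^ 2 * b ^ 2 < c then -b ^ 2
       else if c < min (r ^ 2 * b ^ 2) (σω ^ 2) then -c else -σω ^ 2) ∂μ
    (¬ (1 : ℝ) ^ 2 * bL ^ 2 < σω ^ 2) ∧
    (¬ (1 : ℝ) ^ 2 * bH ^ 2 < σω ^ 2) ∧
    (¬ r ^ 2 * bH ^ 2 < σω ^ 2) ∧
    (r ^ 2 * bL ^ 2 < σω ^ 2) ∧
    (0 < μ (Set.Ioi (r ^ 2 * bL ^ 2))) ∧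
    (-bL ^ 2 < -σω ^ 2) ∧
    W bL < W bH :=
  stmt7_general μ σω r ε hσ hr0 hε hL hpos hsupp
end

section
/- Suppose the GenAI has zero bias and the agent has self-projection parameter ρ ∈ [0,1). If σ_ω < |θ| < σ_ω/(1-ρ), then a rational agent (ρ=0 beliefs, i.e., correctly perceiving delegation payoff -θ²) never delegates for any c > 0, whereas the biased agent delegates exactly when c > (1-ρ)²θ², which occurs with positive probability since the cost distribution has full support on ℝ₊. -/
open MeasureTheory

/-- Zero-bias GenAI and σω < |θ| < σω/(1-ρ).  A rational agent (perceiving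
delegation payoff -θ²) never delegates for any c > 0, while the biased agent
delegates exactly when c > (1-ρ)²θ², which happens with positive probability
since the cost distribution has full support on ℝ₊. -/
theorem stmt9 (μ : Measure ℝ) [IsProbabilityMeasure μ] (σω θ ρ : ℝ)
    (hσ : 0 < σω) (hρ0 : 0 ≤ ρ) (hρ1 : ρ < 1)
    (hθ1 : σω < |θ|) (hθ2 : |θ| < σω / (1 - ρ))
    (hpos : μ {c | c ≤ 0} = 0)
    (hsupp : ∀ x : ℝ, 0 ≤ x → 0 < μ (Set.Ioi x)) :
    (∀ c : ℝ, 0 < c → -θ ^ 2 < max (-c) (-σω ^ 2)) ∧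
      (∀ c : ℝ, 0 < c →
        (max (-c) (-σω ^ 2) < -((1 - ρ) ^ 2 * θ ^ 2) ↔ (1 - ρ) ^ 2 * θ ^ 2 < c)) ∧
      0 < μ (Set.Ioi ((1 - ρ) ^ 2 * θ ^ 2)) := by
  have h1ρ : 0 < 1 - ρ := by linarith
  have habs : 0 ≤ |θ| := abs_nonneg θ
  have hθsq : θ ^ 2 = |θ| ^ 2 := (sq_abs θ).symm
  have hA : σω ^ 2 < θ ^ 2 := by rw [hθsq]; nlinarith [mul_nonneg habs h1ρ.le]
  have hB : (1 - ρ) ^ 2 * θ ^ 2 < σω ^ 2 := by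
    have := (lt_div_iff₀ h1ρ).mp hθ2
    rw [hθsq]; nlinarith [mul_nonneg habs h1ρ.le]
  refine ⟨fun c hc => ?_, fun c hc => ?_, ?_⟩
  · exact lt_of_lt_of_le (by linarith) (le_max_right _ _)
  · constructor
    · intro h
      have := lt_of_le_of_lt (le_max_left (-c) (-σω ^ 2)) h
      linarith
    · intro h
      exact max_lt (by linarith) (by linarith)
  · exact hsupp _ (by positivity)
end

section
/- Suppose the GenAI has zero bias, ρ ∈ (0,1), and |θ| < σ_ω with θ ≠ 0. Then both the rational agent and the biased agent delegate with positive probability, but the set of attention-cost realizations for which the biased agent delegates, {c : c > (1-ρ)²θ²}, strictly contains the set for which the rational agent delegates, {c : c > θ²}. -/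
open MeasureTheory

/-- Zero-bias GenAI, ρ ∈ (0,1), 0 < |θ| < σω.  Both the rational and the
biased agent delegate with positive probability, but the biased agent's
delegation set {c : c > (1-ρ)²θ²} strictly contains the rational agent's
delegation set {c : c > θ²}. -/
theorem stmt10 (μ : Measure ℝ) [IsProbabilityMeasure μ] (σω θ ρ : ℝ)
    (hσ : 0 < σω) (hρ0 : 0 < ρ) (hρ1 : ρ < 1)
    (hθ0 : θ ≠ 0) (hθ : |θ| < σω)
    (hpos : μ {c | c ≤ 0} = 0)
    (hsupp : ∀ x : ℝ, 0 ≤ x → 0 < μ (Set.Ioi x)) :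
    Set.Ioi (θ ^ 2) ⊂ Set.Ioi ((1 - ρ) ^ 2 * θ ^ 2) ∧
      0 < μ (Set.Ioi (θ ^ 2)) ∧
      0 < μ (Set.Ioi ((1 - ρ) ^ 2 * θ ^ 2)) := by
  have hθ2 : 0 < θ ^ 2 := by positivity
  have hlt : (1 - ρ) ^ 2 * θ ^ 2 < θ ^ 2 := by nlinarith [mul_pos hθ2 (mul_pos hρ0 (show (0:ℝ) < 2 - ρ by linarith))]
  refine ⟨⟨Set.Ioi_subset_Ioi hlt.le, fun h => ?_⟩, hsupp _ hθ2.le,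
    hsupp _ (by positivity)⟩
  have := h (Set.mem_Ioi.mpr hlt)
  exact lt_irrefl _ (Set.mem_Ioi.mp this)
end

section
/- For ρ ∈ (0,1), the biased agent's true welfare is not monotonically decreasing in |θ|: there exist types 0 < θ₁ < θ₂ with V(θ₁) < V(θ₂), where V is the biased agent's true expected welfare. In particular one may take θ₂ = σ_ω/(1-ρ) and θ₁ slightly below θ₂. -/
open MeasureTheory Classical in
/-- For ρ ∈ (0,1), the biased agent's true welfare V is not monotonically
decreasing in |θ|: there are types 0 < θ₁ < θ₂ with V(θ₁) < V(θ₂); in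
particular one may take θ₂ = σω/(1-ρ). -/
theorem stmt14 (μ : Measure ℝ) [IsProbabilityMeasure μ] (σω ρ : ℝ)
    (hσ : 0 < σω) (hρ0 : 0 < ρ) (hρ1 : ρ < 1)
    (hpos : μ {c | c ≤ 0} = 0)
    (hatom : ∀ x : ℝ, μ {x} = 0)
    (hsupp : ∀ x y : ℝ, 0 ≤ x → x < y → 0 < μ (Set.Ioo x y)) :
    letI V : ℝ → ℝ := fun θ => ∫ c,
      (if (1 - ρ) ^ 2 * θ ^ 2 < σω ^ 2 ∧ (1 - ρ) ^ 2 * θ ^ 2 < c then -θ ^ 2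
       else if c < min ((1 - ρ) ^ 2 * θ ^ 2) (σω ^ 2) then -c else -σω ^ 2) ∂μ
    ∃ θ₁ θ₂ : ℝ, 0 < θ₁ ∧ θ₁ < θ₂ ∧ θ₂ = σω / (1 - ρ) ∧ V θ₁ < V θ₂ := by
  have h1ρ : 0 < 1 - ρ := by linarith
  set k : ℝ := (1 - ρ) ^ 2 * σω ^ 2 with hkdef
  have hk0 : 0 < k := by positivity
  have hkσ : k < σω ^ 2 := by
    have hσ2 : 0 < σω ^ 2 := by positivity
    have h2 : (1 - ρ) ^ 2 < 1 := by nlinarith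
    calc k < 1 * σω ^ 2 := by exact mul_lt_mul_of_pos_right h2 hσ2
    _ = σω ^ 2 := one_mul _
  set F₁ : ℝ → ℝ := fun c => if c < k then -c else -σω ^ 2 with hF₁
  set F₂ : ℝ → ℝ := fun c => if c < σω ^ 2 then -c else -σω ^ 2 with hF₂
  -- a.e. positivity of c
  have hae : ∀ᵐ c ∂μ, 0 < c := by
    rw [ae_iff]
    convert hpos using 2
    ext c
    simp [not_lt]
  -- measurability
  have hm₁ : AEStronglyMeasurable F₁ μ :=
    (Measurable.ite (measurableSet_lt measurable_id measurable_const)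
      measurable_id.neg measurable_const).aestronglyMeasurable
  have hm₂ : AEStronglyMeasurable F₂ μ :=
    (Measurable.ite (measurableSet_lt measurable_id measurable_const)
      measurable_id.neg measurable_const).aestronglyMeasurable
  -- integrability
  have hint₁ : Integrable F₁ μ := by
    refine Integrable.mono' (integrable_const (max k (σω ^ 2))) hm₁ ?_
    filter_upwards [hae] with c hc
    simp only [hF₁]
    split_ifs with h
    · rw [norm_neg, Real.norm_eq_abs, abs_of_pos hc]
      exact le_max_of_le_left h.le
    · rw [norm_neg, Real.norm_eq_abs, abs_of_pos (by positivity)]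
      exact le_max_right _ _
  have hint₂ : Integrable F₂ μ := by
    refine Integrable.mono' (integrable_const (σω ^ 2)) hm₂ ?_
    filter_upwards [hae] with c hc
    simp only [hF₂]
    split_ifs with h
    · rw [norm_neg, Real.norm_eq_abs, abs_of_pos hc]
      exact h.le
    · rw [norm_neg, Real.norm_eq_abs, abs_of_pos (by positivity)]
  refine ⟨σω, σω / (1 - ρ), hσ, ?_, rfl, ?_⟩
  · rw [lt_div_iff₀ h1ρ]
    nlinarith
  · beta_reduce
    have e1 : (∫ c, (if (1 - ρ) ^ 2 * σω ^ 2 < σω ^ 2 ∧ (1 - ρ) ^ 2 * σω ^ 2 < c then -σω ^ 2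
        else if c < min ((1 - ρ) ^ 2 * σω ^ 2) (σω ^ 2) then -c else -σω ^ 2) ∂μ)
        = ∫ c, F₁ c ∂μ := by
      refine integral_congr_ae (Filter.Eventually.of_forall fun c => ?_)
      simp only [hF₁, ← hkdef, min_eq_left hkσ.le]
      by_cases h1 : c < k
      · simp [h1, not_lt.mpr h1.le, lt_asymm h1]
      · by_cases h2 : k < c
        · simp [h2, hkσ, not_lt.mpr (not_lt.mp h1), h1]
        · have : c = k := le_antisymm (not_lt.mp h2) (not_lt.mp h1)
          simp [this, lt_irrefl]
    have e2 : (∫ c, (if (1 - ρ) ^ 2 * (σω / (1 - ρ)) ^ 2 < σω ^ 2 ∧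
          (1 - ρ) ^ 2 * (σω / (1 - ρ)) ^ 2 < c then -(σω / (1 - ρ)) ^ 2
        else if c < min ((1 - ρ) ^ 2 * (σω / (1 - ρ)) ^ 2) (σω ^ 2) then -c else -σω ^ 2) ∂μ)
        = ∫ c, F₂ c ∂μ := by
      have hθ : (1 - ρ) ^ 2 * (σω / (1 - ρ)) ^ 2 = σω ^ 2 := by
        field_simp
      refine integral_congr_ae (Filter.Eventually.of_forall fun c => ?_)
      simp only [hθ, hF₂, lt_irrefl, false_and, if_false, min_self]
    rw [e1, e2]
    -- the difference is nonnegative, positive on (k, σω²)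
    have hg0 : ∀ c, 0 ≤ F₂ c - F₁ c := by
      intro c
      simp only [hF₁, hF₂]
      by_cases h1 : c < k
      · simp [h1, h1.trans hkσ]
      · by_cases h2 : c < σω ^ 2
        · simp only [h1, h2, if_true, if_false]
          linarith
        · simp [h1, h2]
    have hsub : Set.Ioo k (σω ^ 2) ⊆ Function.support fun c => F₂ c - F₁ c := by
      intro c hc
      have h1 : ¬ c < k := not_lt.mpr hc.1.le
      simp only [Function.mem_support, hF₁, hF₂, h1, hc.2, if_true, if_false]
      intro h
      nlinarith [hc.2]
    have hpos' : 0 < ∫ c, (F₂ c - F₁ c) ∂μ := by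
      rw [integral_pos_iff_support_of_nonneg hg0 (hint₂.sub hint₁)]
      exact lt_of_lt_of_le (hsupp k (σω ^ 2) hk0.le hkσ) (measure_mono hsub)
    rw [integral_sub hint₂ hint₁] at hpos'
    linarith
end

section
/- For any type θ with |θ| < σ_ω/(1-ρ) and θ ≠ 0, and any ρ ∈ (0,1), the biased agent's true expected welfare is weakly lower than the rational agent's welfare of the same type, and strictly lower if the attention-cost distribution assigns positive probability to the interval ((1-ρ)²θ², min(θ², σ_ω²)) ∪ (σ_ω², θ²) whichever parts are nonempty. Specifically, on cost realizations where the biased agent delegates but the rational agent would not, the rational agent's chosen option yields strictly higher true payoff. -/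
open MeasureTheory Classical in
/-- true payoff of an agent with threshold T, type-loss B, default loss S. -/
noncomputable def pay (T B S c : ℝ) : ℝ :=
  if T < S ∧ T < c then -B else if c < min T S then -c else -S

open Classical in
lemma pay_meas (T B S : ℝ) : Measurable (pay T B S) := by
  unfold pay
  refine Measurable.ite ?_ measurable_const
    (Measurable.ite measurableSet_Iio measurable_neg measurable_const)
  by_cases h : T < S
  · have : {c : ℝ | T < S ∧ T < c} = Set.Ioi T := by ext c; simp [h]
    rw [this]; exact measurableSet_Ioi
  · have : {c : ℝ | T < S ∧ T < c} = ∅ := by ext c; simp [h]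
    rw [this]; exact MeasurableSet.empty

lemma pay_bound (T B S c : ℝ) (hc : 0 < c) : ‖pay T B S c‖ ≤ |B| + |S| := by
  unfold pay
  split_ifs with h1 h2 <;> rw [Real.norm_eq_abs]
  · rw [abs_neg]; linarith [abs_nonneg S]
  · rw [abs_neg, abs_of_pos hc]
    linarith [le_abs_self S, min_le_right T S, abs_nonneg B]
  · rw [abs_neg]; linarith [abs_nonneg B]

lemma pay_le (T B S : ℝ) (hTB : T < B) (hTS : T < S) {c : ℝ} (hc : c ≠ B) :
    pay T B S c ≤ pay B B S c := by
  unfold pay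
  rcases lt_or_ge B S with hBS | hSB
  · simp only [hBS, true_and, hTS, min_eq_left hBS.le, min_eq_left hTS.le]
    rcases hc.lt_or_gt with h | h <;> split_ifs <;> linarith
  · have h1 : ¬ (B < S) := not_lt.mpr hSB
    simp only [hTS, true_and, h1, false_and, if_false, min_eq_right hSB,
      min_eq_left hTS.le]
    split_ifs <;> linarith

lemma pay_lt (T B S : ℝ) (hTB : T < B) (hTS : T < S) {c : ℝ}
    (hc : c ∈ Set.Ioo T (min B S) ∪ Set.Ioo S B) :
    pay T B S c < pay B B S c := by
  unfold pay
  rcases hc with ⟨h1, h2⟩ | ⟨h1, h2⟩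
  · have hcB : c < B := lt_of_lt_of_le h2 (min_le_left _ _)
    have hcS : c < S := lt_of_lt_of_le h2 (min_le_right _ _)
    rw [if_pos ⟨hTS, h1⟩, if_neg (fun h => hcB.asymm h.2),
      if_pos h2]
    linarith
  · have hSB : S < B := h1.trans h2
    rw [if_pos ⟨hTS, hTS.trans h1⟩, if_neg (fun h => hSB.not_gt h.1),
      if_neg (by simp only [lt_min_iff, not_and]; intro _; exact h1.asymm)]
    linarith

open MeasureTheory Classical in
/-- For ρ ∈ (0,1) and any θ ≠ 0 with |θ| < σω/(1-ρ), the biased agent's true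
expected welfare is weakly below that of the rational agent of the same type,
and strictly below whenever the cost distribution assigns positive probability
to ((1-ρ)²θ², min(θ², σω²)) ∪ (σω², θ²). -/
theorem stmt15 (μ : Measure ℝ) [IsProbabilityMeasure μ] (σω ρ θ : ℝ)
    (hσ : 0 < σω) (hρ0 : 0 < ρ) (hρ1 : ρ < 1)
    (hθ0 : θ ≠ 0) (hθ : |θ| < σω / (1 - ρ))
    (hpos : μ {c | c ≤ 0} = 0)
    (hatom : ∀ x : ℝ, μ {x} = 0) :
    letI Vb : ℝ := ∫ c,
      (if (1 - ρ) ^ 2 * θ ^ 2 < σω ^ 2 ∧ (1 - ρ) ^ 2 * θ ^ 2 < c then -θ ^ 2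
       else if c < min ((1 - ρ) ^ 2 * θ ^ 2) (σω ^ 2) then -c else -σω ^ 2) ∂μ
    letI Wr : ℝ := ∫ c,
      (if θ ^ 2 < σω ^ 2 ∧ θ ^ 2 < c then -θ ^ 2
       else if c < min (θ ^ 2) (σω ^ 2) then -c else -σω ^ 2) ∂μ
    Vb ≤ Wr ∧
      (0 < μ (Set.Ioo ((1 - ρ) ^ 2 * θ ^ 2) (min (θ ^ 2) (σω ^ 2)) ∪
              Set.Ioo (σω ^ 2) (θ ^ 2)) → Vb < Wr) := by
  have h1ρ : 0 < 1 - ρ := by linarith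
  set A := (1 - ρ) ^ 2 * θ ^ 2 with hAdef
  set B := θ ^ 2 with hBdef
  set S := σω ^ 2 with hSdef
  have hB0 : 0 < B := by rw [hBdef, ← sq_abs]; exact pow_pos (abs_pos.mpr hθ0) 2
  have hS0 : 0 < S := by rw [hSdef]; positivity
  have hAB : A < B := by
    rw [hAdef]
    nlinarith [mul_pos hρ0 hB0, mul_pos (mul_pos hρ0 hρ0) hB0]
  have h1' : |θ| * (1 - ρ) < σω := by
    rw [← lt_div_iff₀ h1ρ]; exact hθ
  have hAS : A < S := by
    rw [hAdef, hSdef]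
    nlinarith [sq_abs θ, mul_nonneg (abs_nonneg θ) h1ρ.le, h1']
  -- rewrite the two integrands as `pay`
  have hfe : (fun c : ℝ => if A < S ∧ A < c then -B else if c < min A S then -c else -S)
      = pay A B S := rfl
  have hge : (fun c : ℝ => if B < S ∧ B < c then -B else if c < min B S then -c else -S)
      = pay B B S := rfl
  show (∫ c, pay A B S c ∂μ) ≤ (∫ c, pay B B S c ∂μ) ∧
    (0 < μ (Set.Ioo A (min B S) ∪ Set.Ioo S B) →
      (∫ c, pay A B S c ∂μ) < (∫ c, pay B B S c ∂μ))
  -- integrability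
  have hae0 : ∀ᵐ c ∂μ, 0 < c := by
    rw [ae_iff]; simpa [not_lt] using hpos
  have haeB : ∀ᵐ c ∂μ, c ≠ B := by
    rw [ae_iff]; simpa using hatom B
  have hintf : Integrable (pay A B S) μ := by
    refine Integrable.mono' (integrable_const (|B| + |S|))
      (pay_meas A B S).aestronglyMeasurable ?_
    filter_upwards [hae0] with c hc using pay_bound A B S c hc
  have hintg : Integrable (pay B B S) μ := by
    refine Integrable.mono' (integrable_const (|B| + |S|))
      (pay_meas B B S).aestronglyMeasurable ?_
    filter_upwards [hae0] with c hc using pay_bound B B S c hc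
  have hle : ∀ᵐ c ∂μ, pay A B S c ≤ pay B B S c := by
    filter_upwards [haeB] with c hc using pay_le A B S hAB hAS hc
  constructor
  · exact integral_mono_ae hintf hintg hle
  · intro hU
    have hnn : 0 ≤ᵐ[μ] fun c => pay B B S c - pay A B S c := by
      filter_upwards [hle] with c hc
      simpa using sub_nonneg.mpr hc
    have hsupp : (Set.Ioo A (min B S) ∪ Set.Ioo S B) ⊆
        Function.support (fun c => pay B B S c - pay A B S c) := by
      intro c hc
      exact (sub_pos.mpr (pay_lt A B S hAB hAS hc)).ne'
    have hpos' : 0 < ∫ c, (pay B B S c - pay A B S c) ∂μ := by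
      rw [integral_pos_iff_support_of_nonneg_ae hnn (hintg.sub hintf)]
      exact lt_of_lt_of_le hU (measure_mono hsupp)
    rw [integral_sub hintg hintf] at hpos'
    linarith
end
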